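/- Let G be a finite group with subgroups P̂₁, ..., P̂ₜ such that each P̂ᵢ is a pᵢ-group for distinct consecutive primes (pᵢ ≠ p_{i+1}), P̂ᵢ ≤ N_G(P̂ⱼ) for i ≤ j, and each quotient Pᵢ = P̂ᵢ/C_{P̂ᵢ}(P_{i+1}) is nontrivial with [Pᵢ, P_{i-1}] = Pᵢ. Then the product ∏ᵢ P̂ᵢ is a subgroup of G of Fitting length at least t. -/

import Mathlib

/-!
Let `1 = F₀ ≤ F₁ ≤ ⋯ ≤ Fₙ` be a normal series of `H = ⨆ P̂ᵢ` with nilpotent factors. Going down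
the tower, `P̂ᵢ ≰ Cᵢ F_{t-1-i}`. Indeed, suppose `P̂ᵢ ≤ Cᵢ F_{k+1}` and work modulo `F_k`. Each
element of `P̂ᵢ` is then an element of `Cᵢ` times a `pᵢ`-element of the nilpotent normal subgroup
`F_{k+1}`, which lies in its normal Sylow `pᵢ`-subgroup `S`. As `Cᵢ` centralizes `P̂_{i+1}` modulo
`C_{i+1}`, this gives `P̂_{i+1} = [P̂_{i+1}, P̂ᵢ] C_{i+1} ≤ C_{i+1} S`. Since `P̂_{i+1}` is a
`p_{i+1}`-group, it meets `S` trivially, so `P̂_{i+1} ≤ C_{i+1} F_k`. For `i = 0` this says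
`F_{t-1} ≠ H`, so `n ≥ t`. The joins `P̂ₖ ⋯ P̂_{t-1}` form a series of `H` with `p`-group factors,
so the infimum defining the Fitting length is over a nonempty set.
-/

/-- A normal series of length `n` with nilpotent quotients. -/
structure NilpotentSeries (G : Type*) [Group G] (n : ℕ) where
  s : ℕ → Subgroup G
  normal : ∀ i, (s i).Normal
  bot : s 0 = ⊥
  top : s n = ⊤
  mono : ∀ i, s i ≤ s (i + 1)
  nilpotent : ∀ i,
    Group.IsNilpotent ((s (i + 1)).map (@QuotientGroup.mk' _ _ (s i) (normal i)))

/-- The Fitting (nilpotent) length of a group: the least length of a normal series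
with nilpotent quotients (junk value `0` if none exists). -/
noncomputable def fittingLength (G : Type*) [Group G] : ℕ :=
  sInf {n | Nonempty (NilpotentSeries G n)}

open scoped commutatorElement

section

variable {Γ : Type*} [Group Γ]

theorem exists_normal_isPGroup_inf_le_of_isNilpotent [Finite Γ] (q : ℕ) [Fact q.Prime]
    (N : Subgroup Γ) [N.Normal] (hN : Group.IsNilpotent N) :
    ∃ S : Subgroup Γ, S.Normal ∧ IsPGroup q S ∧ ∀ R : Subgroup Γ, IsPGroup q R → R ⊓ N ≤ S := by
  obtain ⟨S⟩ : Nonempty (Sylow q N) := inferInstance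
  have := Sylow.characteristic_of_normal S inferInstance
  have := Sylow.unique_of_normal S inferInstance
  refine ⟨(S : Subgroup N).map N.subtype, inferInstance, S.isPGroup'.map _, fun R hR x hx => ?_⟩
  obtain ⟨S', hS'⟩ := hR.comap_subtype (K := N) |>.exists_le_sylow
  rw [Subsingleton.elim S' S] at hS'
  exact ⟨⟨x, hx.2⟩, hS' (Subgroup.mem_subgroupOf.2 hx.1), rfl⟩

theorem IsPGroup.le_of_le_sup_of_normal {p q : ℕ} [Fact p.Prime] [Fact q.Prime] (hpq : p ≠ q)
    {P D S : Subgroup Γ} [S.Normal] (hP : IsPGroup p P) (hS : IsPGroup q S) (hDP : D ≤ P)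
    (h : P ≤ D ⊔ S) : P ≤ D := by
  intro x hx
  obtain ⟨d, hd, s, hs, rfl⟩ := Subgroup.mem_sup_of_normal_right.1 (h hx)
  have hsP : s ∈ P := by simpa using mul_mem (inv_mem (hDP hd)) hx
  have hs1 : s = 1 :=
    Subgroup.disjoint_def.1 (IsPGroup.disjoint_of_ne p q hpq P S hP hS) hsP hs
  simpa [hs1] using hd

theorem le_of_le_commutator_sup [Finite Γ] {p q : ℕ} [Fact p.Prime] [Fact q.Prime] (hpq : p ≠ q)
    {P D Q E N : Subgroup Γ} [N.Normal] (hN : Group.IsNilpotent N)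
    (hP : IsPGroup p P) (hQ : IsPGroup q Q) (hDP : D ≤ P) (hEQ : E ≤ Q)
    (hED : ∀ e ∈ E, ∀ x ∈ P, ⁅e, x⁆ ∈ D) (hPQ : P ≤ ⁅P, Q⁆ ⊔ D) (hQEN : Q ≤ E ⊔ N) :
    P ≤ D := by
  obtain ⟨S, hSn, hS, hQS⟩ := exists_normal_isPGroup_inf_le_of_isNilpotent q N hN
  refine hP.le_of_le_sup_of_normal hpq hS hDP (hPQ.trans (sup_le ?_ le_sup_left))
  rw [Subgroup.commutator_le]
  intro x hx g hg
  obtain ⟨e, he, m, hm, rfl⟩ := Subgroup.mem_sup_of_normal_right.1 (hQEN hg)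
  have hmS : m ∈ S := hQS Q hQ ⟨by simpa using mul_mem (inv_mem (hEQ he)) hg, hm⟩
  have hxmS : ⁅x, m⁆ ∈ S := Subgroup.commutator_le_right ⊤ S
    (Subgroup.commutator_mem_commutator (Subgroup.mem_top x) hmS)
  have hexpand : ⁅x, e * m⁆ = ⁅e, x⁆⁻¹ * (e * ⁅x, m⁆ * e⁻¹) := by
    simp only [commutatorElement_def]; group
  rw [hexpand]
  exact mul_mem (Subgroup.mem_sup_left (inv_mem (hED e he x hx)))
    (Subgroup.mem_sup_right (hSn.conj_mem _ hxmS e))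

theorem le_sup_of_le_commutator_sup [Finite Γ] {p q : ℕ} [Fact p.Prime] [Fact q.Prime]
    (hpq : p ≠ q) {P D Q E F F' : Subgroup Γ} [F.Normal] [F'.Normal]
    (hF' : Group.IsNilpotent (F'.map (QuotientGroup.mk' F)))
    (hP : IsPGroup p P) (hQ : IsPGroup q Q) (hDP : D ≤ P) (hEQ : E ≤ Q)
    (hED : ∀ e ∈ E, ∀ x ∈ P, ⁅e, x⁆ ∈ D) (hPQ : P ≤ ⁅P, Q⁆ ⊔ D) (hQEF : Q ≤ E ⊔ F') :
    P ≤ D ⊔ F := by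
  set f := QuotientGroup.mk' F
  have : (F'.map f).Normal := ‹F'.Normal›.map f (QuotientGroup.mk'_surjective F)
  have hmap : P.map f ≤ D.map f := by
    refine le_of_le_commutator_sup hpq hF' (hP.map f) (hQ.map f) (Subgroup.map_mono hDP)
      (Subgroup.map_mono hEQ) ?_ ?_ ?_
    · rintro _ ⟨e, he, rfl⟩ _ ⟨x, hx, rfl⟩
      rw [← map_commutatorElement]
      exact Subgroup.mem_map_of_mem f (hED e he x hx)
    · rw [← Subgroup.map_commutator, ← Subgroup.map_sup]
      exact Subgroup.map_mono hPQ
    · rw [← Subgroup.map_sup]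
      exact Subgroup.map_mono hQEF
  rwa [Subgroup.map_le_iff_le_comap, Subgroup.comap_map_eq, QuotientGroup.ker_mk'] at hmap

theorem NilpotentSeries.le_length_of_tower [Finite Γ] {n t : ℕ}
    (ser : NilpotentSeries Γ n) {p : ℕ → ℕ} {P C : ℕ → Subgroup Γ}
    (hprime : ∀ i < t, (p i).Prime) (hpgroup : ∀ i < t, IsPGroup (p i) (P i))
    (hpne : ∀ i, i + 1 < t → p i ≠ p (i + 1)) (hCle : ∀ i < t, C i ≤ P i)
    (hCP : ∀ i, i + 1 < t → ∀ c ∈ C i, ∀ y ∈ P (i + 1), ⁅c, y⁆ ∈ C (i + 1))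
    (hcomm : ∀ i, i + 1 < t → P (i + 1) ≤ ⁅P (i + 1), P i⁆ ⊔ C (i + 1))
    (htop : ¬ P (t - 1) ≤ C (t - 1)) : t ≤ n := by
  have key : ∀ k i, i + k + 1 = t → ¬ P i ≤ C i ⊔ ser.s k := by
    intro k
    induction k with
    | zero =>
      intro i hi
      obtain rfl : i = t - 1 := by omega
      rwa [ser.bot, sup_bot_eq]
    | succ k ih =>
      intro i hi hle
      have : Fact (p i).Prime := ⟨hprime i (by omega)⟩
      have : Fact (p (i + 1)).Prime := ⟨hprime (i + 1) (by omega)⟩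
      have := ser.normal k
      have := ser.normal (k + 1)
      exact ih (i + 1) (by omega) <| le_sup_of_le_commutator_sup (hpne i (by omega)).symm
        (ser.nilpotent k) (hpgroup (i + 1) (by omega)) (hpgroup i (by omega))
        (hCle (i + 1) (by omega)) (hCle i (by omega)) (hCP i (by omega)) (hcomm i (by omega)) hle
  by_contra! hn
  refine key (t - 1) 0 (by omega) (le_sup_of_le_right ?_)
  calc P 0 ≤ ser.s n := ser.top ▸ le_top
    _ ≤ ser.s (t - 1) := monotone_nat_of_le_succ ser.mono (by omega)

theorem Subgroup.le_normalizer_iSup {ι : Sort*} {A : Subgroup Γ} {B : ι → Subgroup Γ}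
    (h : ∀ i, A ≤ Subgroup.normalizer (B i : Set Γ)) :
    A ≤ Subgroup.normalizer ((⨆ i, B i : Subgroup Γ) : Set Γ) := fun g hg => by
  rw [Subgroup.mem_normalizer_iff_map_conj_eq, Subgroup.map_iSup]
  exact iSup_congr fun i => Subgroup.mem_normalizer_iff_map_conj_eq.1 (h i hg)

theorem isNilpotent_map_mk'_of_le_sup [Finite Γ] {p : ℕ} [Fact p.Prime]
    {A B N : Subgroup Γ} [N.Normal] (hA : IsPGroup p A) (hB : B ≤ A ⊔ N) :
    Group.IsNilpotent (B.map (QuotientGroup.mk' N)) := by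
  refine ((hA.map (QuotientGroup.mk' N)).to_le ?_).isNilpotent
  simpa [Subgroup.map_sup] using Subgroup.map_mono (f := QuotientGroup.mk' N) hB

theorem isNilpotent_map_mk'_of_le {B N : Subgroup Γ} [N.Normal]
    (hB : B ≤ N) : Group.IsNilpotent (B.map (QuotientGroup.mk' N)) := by
  rw [(Subgroup.map_eq_bot_iff _).2 (by rwa [QuotientGroup.ker_mk'])]
  infer_instance

theorem le_fittingLength {m t : ℕ} (hm : Nonempty (NilpotentSeries Γ m))
    (h : ∀ n, NilpotentSeries Γ n → t ≤ n) : t ≤ fittingLength Γ :=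
  le_csInf ⟨m, hm⟩ fun n ⟨ser⟩ => h n ser

end

section TowerSeries

variable {G : Type*} [Group G] (P : ℕ → Subgroup G) (t : ℕ)

def tailSup (k : ℕ) : Subgroup G := ⨆ i ∈ Finset.Ico k t, P i

theorem tailSup_self : tailSup P t t = ⊥ := by
  simp [tailSup]

theorem tailSup_zero : tailSup P t 0 = ⨆ i ∈ Finset.range t, P i := by
  rw [tailSup, Finset.range_eq_Ico]

theorem tailSup_of_lt {k : ℕ} (hk : k < t) : tailSup P t k = P k ⊔ tailSup P t (k + 1) := by
  rw [tailSup, tailSup, ← Finset.insert_Ico_add_one_left_eq_Ico hk, Finset.iSup_insert]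

theorem tailSup_antitone : Antitone (tailSup P t) := fun _ _ hkl =>
  biSup_mono fun _ hi => Finset.Ico_subset_Ico_left hkl hi

theorem tailSup_le_iSup_range (k : ℕ) : tailSup P t k ≤ ⨆ i ∈ Finset.range t, P i :=
  tailSup_zero P t ▸ tailSup_antitone P t (Nat.zero_le k)

variable {P t}

theorem le_normalizer_tailSup
    (hnorm : ∀ i j, i ≤ j → j < t → P i ≤ Subgroup.normalizer (P j : Set G)) {i : ℕ} (hi : i < t)
    (k : ℕ) : P i ≤ Subgroup.normalizer (tailSup P t k : Set G) := by
  rcases lt_or_ge i k with hik | hki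
  · refine Subgroup.le_normalizer_iSup fun j => Subgroup.le_normalizer_iSup fun hj => ?_
    exact hnorm i j (by grind) (Finset.mem_Ico.1 hj).2
  · exact (le_biSup P (Finset.mem_Ico.2 ⟨hki, hi⟩)).trans Subgroup.le_normalizer

theorem nonempty_nilpotentSeries_iSup [Finite G] {p : ℕ → ℕ}
    (hprime : ∀ i < t, (p i).Prime) (hpgroup : ∀ i < t, IsPGroup (p i) (P i))
    (hnorm : ∀ i j, i ≤ j → j < t → P i ≤ Subgroup.normalizer (P j : Set G)) :
    Nonempty (NilpotentSeries (⨆ i ∈ Finset.range t, P i : Subgroup G) t) := by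
  set H := ⨆ i ∈ Finset.range t, P i
  have hnormal (k : ℕ) : ((tailSup P t k).subgroupOf H).Normal :=
    (Subgroup.normal_subgroupOf_iff_le_normalizer (tailSup_le_iSup_range P t k)).2 <|
      iSup₂_le fun i hi => le_normalizer_tailSup hnorm (Finset.mem_range.1 hi) k
  refine ⟨{ s := fun j => (tailSup P t (t - j)).subgroupOf H,
             normal := fun j => hnormal (t - j),
             bot := by simp [tailSup_self],
             top := by simp [tailSup_zero, H],
             mono := fun j => Subgroup.comap_mono (tailSup_antitone P t (by omega)),
             nilpotent := fun j => ?_ }⟩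
  rcases lt_or_ge j t with hj | hj
  · have : Fact (p (t - j - 1)).Prime := ⟨hprime _ (by omega)⟩
    have hsucc : tailSup P t (t - (j + 1)) = P (t - j - 1) ⊔ tailSup P t (t - j) := by
      rw [show t - (j + 1) = t - j - 1 by omega, tailSup_of_lt P t (by omega),
        show t - j - 1 + 1 = t - j by omega]
    refine isNilpotent_map_mk'_of_le_sup (A := (P (t - j - 1)).subgroupOf H)
      ((hpgroup (t - j - 1) (by omega)).comap_subtype) ?_
    rw [hsucc, Subgroup.subgroupOf_sup (le_iSup₂_of_le (t - j - 1)
      (Finset.mem_range.2 (by omega)) le_rfl) (tailSup_le_iSup_range P t _)]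
  · exact isNilpotent_map_mk'_of_le (Subgroup.comap_mono (tailSup_antitone P t (by omega)))

end TowerSeries

/-- The subgroup `C i` plays the role of `C_{P̂ᵢ}(P_{i+1})`, so that `Pᵢ = P̂ᵢ / C i`;
centralizing the quotient `P_{i+1}` is encoded by commutators falling into `C (i+1)`. -/
theorem tower_fittingLength_general {G : Type*} [Group G] [Finite G] (t : ℕ)
    (p : ℕ → ℕ) (P C : ℕ → Subgroup G)
    (hprime : ∀ i < t, (p i).Prime)
    (hpgroup : ∀ i < t, IsPGroup (p i) (P i))
    (hpne : ∀ i, i + 1 < t → p i ≠ p (i + 1))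
    (hnorm : ∀ i j, i ≤ j → j < t → P i ≤ Subgroup.normalizer (P j : Set G))
    (hCle : ∀ i < t, C i ≤ P i)
    (hCdef : ∀ i, i + 1 < t → ∀ x : G,
      x ∈ C i ↔ x ∈ P i ∧ ∀ y ∈ P (i + 1), ⁅x, y⁆ ∈ C (i + 1))
    (hnontriv : ∀ i < t, C i ≠ P i)
    (hcomm : ∀ i, i + 1 < t → ⁅P (i + 1), P i⁆ ⊔ C (i + 1) = P (i + 1)) :
    t ≤ fittingLength (⨆ i ∈ Finset.range t, P i : Subgroup G) := by
  set H := ⨆ i ∈ Finset.range t, P i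
  have hPH (i : ℕ) (hi : i < t) : P i ≤ H := le_iSup₂_of_le i (Finset.mem_range.2 hi) le_rfl
  have hCH (i : ℕ) (hi : i < t) : C i ≤ H := (hCle i hi).trans (hPH i hi)
  refine le_fittingLength (nonempty_nilpotentSeries_iSup hprime hpgroup hnorm) fun n ser => ?_
  rcases Nat.eq_zero_or_pos t with rfl | ht
  · exact Nat.zero_le n
  refine ser.le_length_of_tower (P := fun i => (P i).subgroupOf H)
    (C := fun i => (C i).subgroupOf H) hprime (fun i hi => (hpgroup i hi).comap_subtype) hpne
    (fun i hi => Subgroup.comap_mono (hCle i hi)) ?_ ?_ ?_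
  · exact fun i hi c hc y hy => ((hCdef i hi c).1 hc).2 y hy
  · intro i hi
    rw [← Subgroup.map_le_map_iff_of_injective H.subtype_injective, Subgroup.map_sup,
      Subgroup.map_commutator, Subgroup.map_subgroupOf_eq_of_le (hPH _ hi),
      Subgroup.map_subgroupOf_eq_of_le (hPH _ (by omega)), Subgroup.map_subgroupOf_eq_of_le
      (hCH _ hi), hcomm i hi]
  · rw [← Subgroup.map_le_map_iff_of_injective H.subtype_injective,
      Subgroup.map_subgroupOf_eq_of_le (hPH _ (by omega)),
      Subgroup.map_subgroupOf_eq_of_le (hCH _ (by omega))]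
    exact fun h => hnontriv (t - 1) (by omega) (le_antisymm (hCle _ (by omega)) h)

/-- A tower `P̂ 0, …, P̂ (t-1)` of `pᵢ`-subgroups witnesses Fitting length at least `t`.
The subgroup `C i` plays the role of `C_{P̂ᵢ}(P_{i+1})`, so that `Pᵢ = P̂ᵢ / C i`;
centralizing the quotient `P_{i+1}` is encoded by commutators falling into `C (i+1)`. -/
theorem tower_fittingLength {G : Type*} [Group G] [Finite G] (t : ℕ) (ht : 0 < t)
    (p : ℕ → ℕ) (P C : ℕ → Subgroup G)
    (hprime : ∀ i < t, (p i).Prime)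
    (hpgroup : ∀ i < t, IsPGroup (p i) (P i))
    (hpne : ∀ i, i + 1 < t → p i ≠ p (i + 1))
    (hnorm : ∀ i j, i ≤ j → j < t → P i ≤ Subgroup.normalizer (P j : Set G))
    (hClast : C (t - 1) = ⊥)
    (hCle : ∀ i < t, C i ≤ P i)
    (hCdef : ∀ i, i + 1 < t → ∀ x : G,
      x ∈ C i ↔ x ∈ P i ∧ ∀ y ∈ P (i + 1), ⁅x, y⁆ ∈ C (i + 1))
    (hnontriv : ∀ i < t, C i ≠ P i)
    (hcomm : ∀ i, i + 1 < t → ⁅P (i + 1), P i⁆ ⊔ C (i + 1) = P (i + 1)) :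
    t ≤ fittingLength (⨆ i ∈ Finset.range t, P i : Subgroup G) :=
  tower_fittingLength_general t p P C hprime hpgroup hpne hnorm hCle hCdef hnontriv hcomm
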